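/- Let D ≥ 1 and let V = so(D) ⊕ ℝ^D ⊕ ℝ^D ⊕ ℝ with elements A + B_u + P_v + cH. For χ > 0 let [·,·]_χ be the torsional galilean anti de Sitter bracket on V: [A,A'] = AA' − A'A, [A,B_v] = B_{Av}, [A,P_v] = P_{Av}, [A,H] = 0, [H,B_v] = −P_v, [H,P_v] = (1+χ²)B_v + 2χP_v, all other brackets of generators zero. Let φ_χ ∈ GL(V) be defined by φ_χ A = A, φ_χ B_v = B_v, φ_χ P_v = χP_v, φ_χ H = χH, and define the transported bracket ⟦X,Y⟧_χ := φ_χ^{-1}[φ_χ X, φ_χ Y]_χ. Then ⟦H,B_v⟧_χ = −P_v and ⟦H,P_v⟧_χ = (1 + χ^{-2})B_v + 2P_v (with rotational brackets unchanged), and for every X, Y ∈ V the limit lim_{χ→∞}⟦X,Y⟧_χ exists and equals the bracket with [H,B_v] = −P_v and [H,P_v] = B_v + 2P_v (and the same rotational brackets). In particular, the Lie algebra of the torsional galilean de Sitter spacetime dSG_1 is the χ → ∞ limit of the family AdSG_χ. -/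

import Mathlib

open Matrix

noncomputable section

namespace Stmt12

/-- `so(D)`: the real skew-symmetric `D × D` matrices. -/
def soD (D : ℕ) : Submodule ℝ (Matrix (Fin D) (Fin D) ℝ) where
  carrier := {M | Mᵀ = -M}
  add_mem' := fun {a b} ha hb => by
    simp only [Set.mem_setOf_eq] at ha hb ⊢
    rw [Matrix.transpose_add, ha, hb, neg_add]
  zero_mem' := by simp only [Set.mem_setOf_eq, Matrix.transpose_zero, neg_zero]
  smul_mem' := fun c a ha => by
    simp only [Set.mem_setOf_eq] at ha ⊢
    rw [Matrix.transpose_smul, ha, smul_neg]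

theorem mem_soD {D : ℕ} {M : Matrix (Fin D) (Fin D) ℝ} : M ∈ soD D ↔ Mᵀ = -M := Iff.rfl

/-- The commutator `AA' − A'A` of two skew-symmetric matrices, as an element of `so(D)`. -/
def soComm {D : ℕ} (A B : soD D) : soD D :=
  ⟨A.val * B.val - B.val * A.val, by
    have hA : (A.val)ᵀ = -A.val := A.2
    have hB : (B.val)ᵀ = -B.val := B.2
    rw [mem_soD, Matrix.transpose_sub, Matrix.transpose_mul, Matrix.transpose_mul, hA, hB,
      neg_mul_neg, neg_mul_neg, neg_sub]⟩

/-- The underlying vector space `V = so(D) ⊕ ℝ^D ⊕ ℝ^D ⊕ ℝ`, an element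
`(A, u, v, c)` standing for `A + B_u + P_v + cH`. -/
abbrev KV (D : ℕ) := soD D × (Fin D → ℝ) × (Fin D → ℝ) × ℝ

/-- The torsional galilean anti de Sitter bracket `AdSG_χ` on `V`:
`[A,A'] = AA' − A'A`, `[A,B_v] = B_{Av}`, `[A,P_v] = P_{Av}`, `[A,H] = 0`,
`[H,B_v] = −P_v`, `[H,P_v] = (1+χ²)B_v + 2χP_v`, all other brackets of generators zero. -/
def adsgBr {D : ℕ} (χ : ℝ) (X Y : KV D) : KV D :=
  (soComm X.1 Y.1,
   X.1.val.mulVec Y.2.1 - Y.1.val.mulVec X.2.1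
     + ((1 + χ ^ 2) * X.2.2.2) • Y.2.2.1 - ((1 + χ ^ 2) * Y.2.2.2) • X.2.2.1,
   X.1.val.mulVec Y.2.2.1 - Y.1.val.mulVec X.2.2.1 - X.2.2.2 • Y.2.1 + Y.2.2.2 • X.2.1
     + (2 * χ * X.2.2.2) • Y.2.2.1 - (2 * χ * Y.2.2.2) • X.2.2.1,
   0)

/-- The bracket of the torsional galilean de Sitter spacetime `dSG₁` on `V`:
`[A,A'] = AA' − A'A`, `[A,B_v] = B_{Av}`, `[A,P_v] = P_{Av}`, `[A,H] = 0`,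
`[H,B_v] = −P_v`, `[H,P_v] = B_v + 2P_v`, all other brackets of generators zero. -/
def dsgOneBr {D : ℕ} (X Y : KV D) : KV D :=
  (soComm X.1 Y.1,
   X.1.val.mulVec Y.2.1 - Y.1.val.mulVec X.2.1 + X.2.2.2 • Y.2.2.1 - Y.2.2.2 • X.2.2.1,
   X.1.val.mulVec Y.2.2.1 - Y.1.val.mulVec X.2.2.1 - X.2.2.2 • Y.2.1 + Y.2.2.2 • X.2.1
     + (2 * X.2.2.2) • Y.2.2.1 - (2 * Y.2.2.2) • X.2.2.1,
   0)

/-- The invertible linear map `φ_χ ∈ GL(V)` which is the identity on `so(D)` and on the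
`B`-component and scales the `P`- and `H`-components by `χ`. -/
def phiScale {D : ℕ} (χ : ℝ) (X : KV D) : KV D := (X.1, X.2.1, χ • X.2.2.1, χ * X.2.2.2)

/-- The bracket of `AdSG_χ` transported along `φ_χ`: `⟦X,Y⟧_χ = φ_χ [φ_χ⁻¹ X, φ_χ⁻¹ Y]_χ`. -/
def transBr {D : ℕ} (χ : ℝ) (X Y : KV D) : KV D :=
  phiScale χ (adsgBr χ (phiScale χ⁻¹ X) (phiScale χ⁻¹ Y))

/-- The `B_v` term of `⟦H,P_v⟧_χ`, the only part of the transported bracket that carries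
the factor `χ⁻²`. -/
def boostCorrection {D : ℕ} (X Y : KV D) : KV D :=
  (0, X.2.2.2 • Y.2.2.1 - Y.2.2.2 • X.2.2.1, 0, 0)

theorem transBr_eq_dsgOneBr_add {D : ℕ} {χ : ℝ} (hχ : χ ≠ 0) (X Y : KV D) :
    transBr χ X Y = dsgOneBr X Y + (χ⁻¹ ^ 2) • boostCorrection X Y := by
  simp only [transBr, phiScale, adsgBr, dsgOneBr, boostCorrection, Prod.mk_add_mk, Prod.smul_mk,
    Prod.mk.injEq]
  refine ⟨by simp, ?_, ?_, by simp⟩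
  · funext i
    simp only [Pi.add_apply, Pi.sub_apply, Pi.smul_apply, smul_eq_mul]
    field_simp
    ring
  · funext i
    simp only [Matrix.mulVec_smul, Pi.add_apply, Pi.sub_apply, Pi.smul_apply, smul_eq_mul,
      Pi.zero_apply]
    field_simp
    ring

theorem transBr_H_boost {D : ℕ} {χ : ℝ} (hχ : χ ≠ 0) (v : Fin D → ℝ) :
    transBr χ ((0, 0, 0, 1) : KV D) (0, v, 0, 0) = (0, 0, -v, 0) := by
  rw [transBr_eq_dsgOneBr_add hχ]
  ext <;> simp [dsgOneBr, soComm, boostCorrection]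

theorem transBr_H_momentum {D : ℕ} {χ : ℝ} (hχ : χ ≠ 0) (v : Fin D → ℝ) :
    transBr χ ((0, 0, 0, 1) : KV D) (0, 0, v, 0) = (0, (1 + χ⁻¹ ^ 2) • v, (2 : ℝ) • v, 0) := by
  rw [transBr_eq_dsgOneBr_add hχ]
  ext <;> simp [dsgOneBr, soComm, boostCorrection, add_mul]

theorem tendsto_add_inv_sq_smul_atTop {M : Type*} [AddCommGroup M] [Module ℝ M]
    [TopologicalSpace M] [IsTopologicalAddGroup M] [ContinuousSMul ℝ M] (a b : M) :
    Filter.Tendsto (fun χ : ℝ => a + (χ⁻¹ ^ 2) • b) Filter.atTop (nhds a) := by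
  have hinv : Filter.Tendsto (fun χ : ℝ => χ⁻¹ ^ 2) Filter.atTop (nhds 0) := by
    simpa using (tendsto_inv_atTop_zero (𝕜 := ℝ)).pow 2
  simpa using tendsto_const_nhds.add (hinv.smul_const b)

theorem tendsto_transBr_atTop {D : ℕ} (X Y : KV D) :
    Filter.Tendsto (fun χ : ℝ => transBr χ X Y) Filter.atTop (nhds (dsgOneBr X Y)) := by
  refine (tendsto_add_inv_sq_smul_atTop _ (boostCorrection X Y)).congr' ?_
  filter_upwards [Filter.eventually_gt_atTop 0] with χ hχ
  exact (transBr_eq_dsgOneBr_add hχ.ne' X Y).symm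

end Stmt12

open Stmt12 in
theorem stmt12_general (D : ℕ) :
    (∀ χ : ℝ, 0 < χ →
      (∀ v : Fin D → ℝ, transBr χ ((0, 0, 0, 1) : KV D) (0, v, 0, 0) = (0, 0, -v, 0)) ∧
      (∀ v : Fin D → ℝ, transBr χ ((0, 0, 0, 1) : KV D) (0, 0, v, 0) =
        (0, (1 + χ⁻¹ ^ 2) • v, (2 : ℝ) • v, 0))) ∧
    (∀ X Y : KV D,
      Filter.Tendsto (fun χ : ℝ => transBr χ X Y) Filter.atTop (nhds (dsgOneBr X Y))) :=
  ⟨fun _ hχ => ⟨transBr_H_boost hχ.ne', transBr_H_momentum hχ.ne'⟩, tendsto_transBr_atTop⟩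

open Stmt12 in
/-- The transported brackets of the torsional galilean anti de Sitter algebras satisfy
`⟦H,B_v⟧_χ = −P_v` and `⟦H,P_v⟧_χ = (1+χ⁻²)B_v + 2P_v`, and converge, as `χ → ∞`, to the
bracket with `[H,B_v] = −P_v` and `[H,P_v] = B_v + 2P_v` (and the same rotational brackets).
In particular, the Lie algebra of the torsional galilean de Sitter spacetime `dSG₁` is the
`χ → ∞` limit of the family `AdSG_χ`. -/
theorem stmt12 (D : ℕ) (hD : 1 ≤ D) :
    (∀ χ : ℝ, 0 < χ →
      (∀ v : Fin D → ℝ, transBr χ ((0, 0, 0, 1) : KV D) (0, v, 0, 0) = (0, 0, -v, 0)) ∧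
      (∀ v : Fin D → ℝ, transBr χ ((0, 0, 0, 1) : KV D) (0, 0, v, 0) =
        (0, (1 + χ⁻¹ ^ 2) • v, (2 : ℝ) • v, 0))) ∧
    (∀ X Y : KV D,
      Filter.Tendsto (fun χ : ℝ => transBr χ X Y) Filter.atTop (nhds (dsgOneBr X Y))) :=
  stmt12_general D
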